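/- arXiv:2201.00154 — 6 statements merged into one kernel-verified Lean document; each statement's English description precedes it below -/
import Mathlib

section
/- Let G be an indecomposable symmetric real n×n matrix with all diagonal entries equal to 1 and all off-diagonal entries ≤ 0. If G is positive semidefinite but not positive definite, then the kernel of G is one-dimensional, and every proper principal submatrix of G is positive definite. -/
open Matrix
open scoped ComplexOrder

/-! Replacing a vector by its entrywise absolute value can only lower the quadratic form of a matrix
with nonpositive off-diagonal entries, so for positive semidefinite `G` the vector `|v|` lies in the
kernel whenever `v` does. Row `j` of `G *ᵥ |v| = 0` is a sum of nonpositive terms, so if `v`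
vanishes at `j` it vanishes at every neighbour of `j`; by indecomposability a kernel vector that
vanishes somewhere vanishes everywhere. This forces the kernel to be a line, and makes every proper
principal submatrix definite: a null vector of its quadratic form extends by zero to a kernel
vector of `G`. -/

namespace Matrix

variable {ι m : Type*} [Fintype ι] [Fintype m]

theorem PosSemidef.exists_mulVec_eq_zero_of_not_posDef [DecidableEq ι] {𝕜 : Type*} [RCLike 𝕜]
    {A : Matrix ι ι 𝕜} (hA : A.PosSemidef) (hA' : ¬A.PosDef) : ∃ v ≠ 0, A *ᵥ v = 0 := by
  rw [hA.posDef_iff_isUnit, isUnit_iff_isUnit_det, isUnit_iff_ne_zero, not_not] at hA'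
  exact exists_mulVec_eq_zero_iff.mpr hA'

theorem dotProduct_submatrix_mulVec_comp {R : Type*} [CommSemiring R] (M : Matrix ι ι R)
    {e : m → ι} (he : Function.Injective e) {w : ι → R} (hw : ∀ j ∉ Set.range e, w j = 0) :
    (w ∘ e) ⬝ᵥ M.submatrix e e *ᵥ (w ∘ e) = w ⬝ᵥ M *ᵥ w := by
  simp only [dotProduct, mulVec, submatrix_apply, Function.comp_apply]
  refine Fintype.sum_of_injective e he _ _ (fun j hj ↦ by simp [hw j hj]) fun a ↦ ?_
  congr 1
  exact Fintype.sum_of_injective e he _ _ (fun j hj ↦ by simp [hw j hj]) fun _ ↦ rfl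

theorem abs_dotProduct_mulVec_abs_le {G : Matrix ι ι ℝ} (hoff : ∀ i j, i ≠ j → G i j ≤ 0)
    (v : ι → ℝ) : |v| ⬝ᵥ G *ᵥ |v| ≤ v ⬝ᵥ G *ᵥ v := by
  rw [dot_mulVec_eq_sum_sum, dot_mulVec_eq_sum_sum]
  refine Finset.sum_le_sum fun j _ ↦ Finset.sum_le_sum fun i _ ↦ ?_
  rcases eq_or_ne i j with rfl | hij
  · simp only [Pi.abs_apply]
    rw [mul_right_comm, abs_mul_abs_self, mul_right_comm]
  · calc |v i| * G i j * |v j| = G i j * |v i * v j| := by rw [abs_mul]; ring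
      _ ≤ G i j * (v i * v j) := mul_le_mul_of_nonpos_left (le_abs_self _) (hoff i j hij)
      _ = v i * G i j * v j := by ring

-- The cut form of connectedness of the graph with edges `{i, j}` for `G i j ≠ 0`.
def IsIndecomposable {R : Type*} [Zero R] (G : Matrix ι ι R) : Prop :=
  ∀ S : Finset ι, S.Nonempty → S ≠ Finset.univ → ∃ i ∈ S, ∃ j ∉ S, G i j ≠ 0

variable {G : Matrix ι ι ℝ}

theorem PosSemidef.mulVec_abs_eq_zero (hpsd : G.PosSemidef) (hoff : ∀ i j, i ≠ j → G i j ≤ 0)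
    {v : ι → ℝ} (hv : G *ᵥ v = 0) : G *ᵥ |v| = 0 := by
  have hq : |v| ⬝ᵥ G *ᵥ |v| = 0 :=
    le_antisymm (by simpa [hv] using abs_dotProduct_mulVec_abs_le hoff v)
      (by simpa using hpsd.dotProduct_mulVec_nonneg |v|)
  exact (hpsd.dotProduct_mulVec_zero_iff |v|).mp (by simpa using hq)

theorem apply_eq_zero_of_mulVec_eq_zero_of_nonneg (hoff : ∀ i j, i ≠ j → G i j ≤ 0)
    {u : ι → ℝ} (hu : 0 ≤ u) (hGu : G *ᵥ u = 0) {i j : ι} (hj : u j = 0) (hji : G j i ≠ 0) :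
    u i = 0 := by
  have hterm : ∀ k ∈ Finset.univ, G j k * u k ≤ 0 := fun k _ ↦ by
    rcases eq_or_ne j k with rfl | hjk
    · simp [hj]
    · exact mul_nonpos_of_nonpos_of_nonneg (hoff j k hjk) (hu k)
  have hrow : ∑ k, G j k * u k = 0 := congrFun hGu j
  have hterm_i := (Finset.sum_eq_zero_iff_of_nonpos hterm).mp hrow i (Finset.mem_univ i)
  exact (mul_eq_zero.mp hterm_i).resolve_left hji

theorem eq_zero_of_mulVec_eq_zero_of_apply_eq_zero (hoff : ∀ i j, i ≠ j → G i j ≤ 0)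
    (hindec : G.IsIndecomposable) (hpsd : G.PosSemidef) {v : ι → ℝ} (hv : G *ᵥ v = 0) {j : ι}
    (hj : v j = 0) : v = 0 := by
  classical
  by_contra hne
  set S := Finset.univ.filter fun i ↦ v i ≠ 0
  have hSne : S.Nonempty := by
    obtain ⟨i, hi⟩ := Function.ne_iff.mp hne
    exact ⟨i, by simpa [S] using hi⟩
  have hSuniv : S ≠ Finset.univ := fun h ↦ by simpa [S, hj] using Finset.eq_univ_iff_forall.mp h j
  obtain ⟨i, hiS, k, hkS, hik⟩ := hindec S hSne hSuniv
  have hki : G k i ≠ 0 := by rwa [← hpsd.1.apply i k, star_trivial] at hik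
  have hvi : |v i| = 0 := apply_eq_zero_of_mulVec_eq_zero_of_nonneg hoff (abs_nonneg v)
    (hpsd.mulVec_abs_eq_zero hoff hv) (by simpa [S] using hkS) hki
  exact (Finset.mem_filter.mp hiS).2 (abs_eq_zero.mp hvi)

theorem eq_smul_of_mulVec_eq_zero (hoff : ∀ i j, i ≠ j → G i j ≤ 0)
    (hindec : G.IsIndecomposable) (hpsd : G.PosSemidef) {v w : ι → ℝ} (hv : G *ᵥ v = 0)
    (hw : G *ᵥ w = 0) {i : ι} (hvi : v i ≠ 0) : w = (w i / v i) • v := by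
  rw [← sub_eq_zero]
  refine eq_zero_of_mulVec_eq_zero_of_apply_eq_zero hoff hindec hpsd ?_ (j := i) ?_
  · rw [mulVec_sub, mulVec_smul, hv, hw, smul_zero, sub_zero]
  · simp [div_mul_cancel₀ _ hvi]

theorem posDef_submatrix_of_not_surjective (hoff : ∀ i j, i ≠ j → G i j ≤ 0)
    (hindec : G.IsIndecomposable) (hpsd : G.PosSemidef) {e : m → ι}
    (he : Function.Injective e) (hne : ¬Function.Surjective e) : (G.submatrix e e).PosDef := by
  obtain ⟨j, hj⟩ := not_forall.mp hne
  refine posDef_iff_dotProduct_mulVec.mpr ⟨hpsd.1.submatrix e, fun x hx ↦ ?_⟩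
  set w : ι → ℝ := Function.extend e x 0
  have hwe : w ∘ e = x := funext (he.extend_apply x 0)
  have hw : ∀ k ∉ Set.range e, w k = 0 := fun k hk ↦ Function.extend_apply' x (0 : ι → ℝ) k hk
  rw [star_trivial, ← hwe, dotProduct_submatrix_mulVec_comp G he hw]
  refine lt_of_le_of_ne (by simpa using hpsd.dotProduct_mulVec_nonneg w) fun hq ↦ hx ?_
  have hGw : G *ᵥ w = 0 := (hpsd.dotProduct_mulVec_zero_iff w).mp (by simpa using hq.symm)
  rw [← hwe, eq_zero_of_mulVec_eq_zero_of_apply_eq_zero hoff hindec hpsd hGw (hw j hj)]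
  rfl

end Matrix

theorem parabolic_gram_matrix_general
    (n : ℕ) (G : Matrix (Fin n) (Fin n) ℝ)
    (hoff : ∀ i j, i ≠ j → G i j ≤ 0)
    (hindec : ∀ S : Finset (Fin n), S.Nonempty → S ≠ Finset.univ →
      ∃ i ∈ S, ∃ j ∉ S, G i j ≠ 0)
    (hpsd : G.PosSemidef) (hnpd : ¬ G.PosDef) :
    (∃ v : Fin n → ℝ, v ≠ 0 ∧ G.mulVec v = 0 ∧
      ∀ w : Fin n → ℝ, G.mulVec w = 0 → ∃ c : ℝ, w = c • v) ∧
    (∀ S : Finset (Fin n), S ≠ Finset.univ →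
      (G.submatrix (fun i : ↥S => (i : Fin n)) (fun i : ↥S => (i : Fin n))).PosDef) := by
  obtain ⟨v, hv0, hv⟩ := hpsd.exists_mulVec_eq_zero_of_not_posDef hnpd
  obtain ⟨i, hvi⟩ := Function.ne_iff.mp hv0
  refine ⟨⟨v, hv0, hv, fun w hw ↦
      ⟨w i / v i, eq_smul_of_mulVec_eq_zero hoff hindec hpsd hv hw hvi⟩⟩,
    fun S hS ↦ posDef_submatrix_of_not_surjective hoff hindec hpsd Subtype.val_injective ?_⟩
  exact fun hsurj ↦ hS <| Finset.eq_univ_iff_forall.mpr fun j ↦ by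
    obtain ⟨a, rfl⟩ := hsurj j
    exact a.2

/-- An indecomposable symmetric matrix with unit diagonal and nonpositive off-diagonal
entries which is positive semidefinite but not positive definite has one-dimensional
kernel, and all its proper principal submatrices are positive definite. -/
theorem parabolic_gram_matrix
    (n : ℕ) (G : Matrix (Fin n) (Fin n) ℝ)
    (hsymm : G.IsSymm)
    (hdiag : ∀ i, G i i = 1)
    (hoff : ∀ i j, i ≠ j → G i j ≤ 0)
    (hindec : ∀ S : Finset (Fin n), S.Nonempty → S ≠ Finset.univ →
      ∃ i ∈ S, ∃ j ∉ S, G i j ≠ 0)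
    (hpsd : G.PosSemidef) (hnpd : ¬ G.PosDef) :
    (∃ v : Fin n → ℝ, v ≠ 0 ∧ G.mulVec v = 0 ∧
      ∀ w : Fin n → ℝ, G.mulVec w = 0 → ∃ c : ℝ, w = c • v) ∧
    (∀ S : Finset (Fin n), S ≠ Finset.univ →
      (G.submatrix (fun i : ↥S => (i : Fin n)) (fun i : ↥S => (i : Fin n))).PosDef) :=
  parabolic_gram_matrix_general n G hoff hindec hpsd hnpd
end

section
/- The 3×3 matrix G with diagonal entries 1, G_{12} = G_{21} = -cos(π/k), G_{13} = G_{31} = -cos(π/l), G_{23} = G_{32} = -cos(π/m), where k, l, m ≥ 2 are integers, is positive definite if and only if 1/k + 1/l + 1/m > 1. -/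
open Matrix Real

/-!
Write `a, b, c` for the cosines of the three angles `α, β, γ ∈ (0, π/2]`. Completing the square
shows that the Gram matrix is positive definite exactly when its determinant
`1 - a² - b² - c² - 2abc` is positive (the leading `2 × 2` minor `1 - a²` is automatically
positive). Trigonometrically the determinant factors as
`-(cos (α + β) + cos γ) * (cos (α - β) + cos γ)`, whose second factor is positive for acute
angles, so it is positive iff `cos γ < cos (π - α - β)`, i.e. iff `α + β + γ > π`.
For `α, β, γ = π/k, π/l, π/m` this is `1/k + 1/l + 1/m > 1`.
-/

def gram3 (a b c : ℝ) : Matrix (Fin 3) (Fin 3) ℝ :=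
  !![1, -a, -b; -a, 1, -c; -b, -c, 1]

theorem det_gram3 (a b c : ℝ) :
    (gram3 a b c).det = 1 - a ^ 2 - b ^ 2 - c ^ 2 - 2 * a * b * c := by
  simp only [gram3, det_fin_three, of_apply, cons_val', cons_val_zero, cons_val_one,
    cons_val_two, empty_val', cons_val_fin_one, head_cons, tail_cons, head_fin_const]
  ring

theorem isHermitian_gram3 (a b c : ℝ) : (gram3 a b c).IsHermitian := by
  ext i j
  fin_cases i <;> fin_cases j <;> simp [gram3]

theorem dotProduct_gram3_mulVec (a b c : ℝ) (x : Fin 3 → ℝ) :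
    star x ⬝ᵥ (gram3 a b c *ᵥ x) =
      x 0 ^ 2 + x 1 ^ 2 + x 2 ^ 2 - 2 * a * x 0 * x 1 - 2 * b * x 0 * x 2
        - 2 * c * x 1 * x 2 := by
  simp only [gram3, dotProduct, Pi.star_apply, star_trivial, mulVec, of_apply, cons_val',
    cons_val_fin_one, Fin.sum_univ_three, cons_val_zero, cons_val_one, cons_val]
  ring

theorem gram3_posDef_of_det_pos {a b c : ℝ} (ha : a ^ 2 < 1) (hdet : 0 < (gram3 a b c).det) :
    (gram3 a b c).PosDef := by
  rw [det_gram3] at hdet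
  refine posDef_iff_dotProduct_mulVec.2 ⟨isHermitian_gram3 a b c, fun x hx ↦ ?_⟩
  rw [dotProduct_gram3_mulVec]
  by_contra! hQ
  set Q := x 0 ^ 2 + x 1 ^ 2 + x 2 ^ 2 - 2 * a * x 0 * x 1 - 2 * b * x 0 * x 2
    - 2 * c * x 1 * x 2
  have ha' : 0 < 1 - a ^ 2 := by linarith
  -- Completing the square: the three summands are nonnegative and vanish in turn only at `x = 0`.
  have hsq : (1 - a ^ 2) * Q = (1 - a ^ 2) * (x 0 - a * x 1 - b * x 2) ^ 2
      + ((1 - a ^ 2) * x 1 - (c + a * b) * x 2) ^ 2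
      + (1 - a ^ 2 - b ^ 2 - c ^ 2 - 2 * a * b * c) * x 2 ^ 2 := by
    ring
  have hQ' : (1 - a ^ 2) * Q ≤ 0 := mul_nonpos_of_nonneg_of_nonpos ha'.le hQ
  have h2 : x 2 = 0 := by
    by_contra h
    nlinarith [mul_pos hdet (sq_pos_of_ne_zero h)]
  rw [h2] at hsq
  have h1 : x 1 = 0 := by
    by_contra h
    nlinarith [mul_pos (mul_pos ha' ha') (sq_pos_of_ne_zero h)]
  rw [h1] at hsq
  have h0 : x 0 = 0 := by
    by_contra h
    nlinarith [mul_pos ha' (sq_pos_of_ne_zero h)]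
  exact hx (by ext i; fin_cases i <;> assumption)

theorem gram3_posDef_iff {a b c : ℝ} (ha : a ^ 2 < 1) :
    (gram3 a b c).PosDef ↔ 0 < (gram3 a b c).det :=
  ⟨PosDef.det_pos, gram3_posDef_of_det_pos ha⟩

theorem det_gram3_cos (α β γ : ℝ) :
    (gram3 (cos α) (cos β) (cos γ)).det = -(cos (α + β) + cos γ) * (cos (α - β) + cos γ) := by
  rw [det_gram3, cos_add, cos_sub]
  nlinarith [sin_sq_add_cos_sq α, sin_sq_add_cos_sq β]

theorem cos_add_add_cos_neg_iff {α β γ : ℝ} (hαβ : 0 ≤ α + β) (hαβ' : α + β ≤ π)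
    (hγ : γ ∈ Set.Icc 0 π) : cos (α + β) + cos γ < 0 ↔ π < α + β + γ := by
  rw [← neg_neg (cos (α + β)), ← cos_pi_sub, add_comm, ← sub_eq_add_neg, sub_neg,
    strictAntiOn_cos.lt_iff_gt hγ ⟨by linarith, by linarith⟩]
  constructor <;> intro <;> linarith

theorem gram3_cos_posDef_iff {α β γ : ℝ} (hα : α ∈ Set.Ioc 0 (π / 2))
    (hβ : β ∈ Set.Ioc 0 (π / 2)) (hγ : γ ∈ Set.Ioc 0 (π / 2)) :
    (gram3 (cos α) (cos β) (cos γ)).PosDef ↔ π < α + β + γ := by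
  obtain ⟨hα0, hα1⟩ := hα
  obtain ⟨hβ0, hβ1⟩ := hβ
  obtain ⟨hγ0, hγ1⟩ := hγ
  have hcos_sq : cos α ^ 2 < 1 := by
    nlinarith [sin_sq_add_cos_sq α, sin_pos_of_pos_of_lt_pi hα0 (by linarith [pi_pos])]
  have hpos : 0 < cos (α - β) + cos γ :=
    add_pos_of_pos_of_nonneg (cos_pos_of_mem_Ioo ⟨by linarith, by linarith⟩)
      (cos_nonneg_of_mem_Icc ⟨by linarith, hγ1⟩)
  rw [gram3_posDef_iff hcos_sq, det_gram3_cos, mul_pos_iff_of_pos_right hpos, neg_pos,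
    cos_add_add_cos_neg_iff (by linarith) (by linarith) ⟨hγ0.le, by linarith⟩]

/-- The Gram matrix of a triangle with angles π/k, π/l, π/m is positive definite
iff 1/k + 1/l + 1/m > 1 (spherical Coxeter triangles). -/
theorem spherical_triangle_gram_posDef_iff
    (k l m : ℕ) (hk : 2 ≤ k) (hl : 2 ≤ l) (hm : 2 ≤ m) :
    (!![(1 : ℝ), -Real.cos (π / k), -Real.cos (π / l);
        -Real.cos (π / k), 1, -Real.cos (π / m);
        -Real.cos (π / l), -Real.cos (π / m), 1]).PosDef ↔
      1 < 1 / (k : ℝ) + 1 / (l : ℝ) + 1 / (m : ℝ) := by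
  have pi_div_mem {n : ℕ} (hn : 2 ≤ n) : π / n ∈ Set.Ioc 0 (π / 2) := by
    have hn' : (2 : ℝ) ≤ n := by exact_mod_cast hn
    exact ⟨by positivity, div_le_div_of_nonneg_left pi_pos.le two_pos hn'⟩
  have hsum : π / k + π / l + π / m = π * (1 / (k : ℝ) + 1 / (l : ℝ) + 1 / (m : ℝ)) := by ring
  rw [← lt_mul_iff_one_lt_right pi_pos, ← hsum]
  exact gram3_cos_posDef_iff (pi_div_mem hk) (pi_div_mem hl) (pi_div_mem hm)
end

section
/- For integers k, l, m ≥ 2, the determinant of the 3×3 symmetric matrix with ones on the diagonal and off-diagonal entries -cos(π/k), -cos(π/l), -cos(π/m) equals zero if and only if (k,l,m) is a permutation of (3,3,3), (2,4,4), or (2,3,6). -/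
/-!
Expanding the determinant gives `1 - a² - b² - c² - 2abc` with `a = cos α`, `b = cos β`,
`c = cos γ`, which factors as `-(cos α + cos (β + γ)) (cos α + cos (β - γ))`. For angles in
`(0, π/2]` the second factor is positive and the first vanishes exactly when `α + β + γ = π`.
With `α, β, γ = π/k, π/l, π/m` this is `1/k + 1/l + 1/m = 1`, i.e. `klm = kl + km + lm`, whose
solutions with `k, l, m ≥ 2` have all entries at most `6` and are found by enumeration.
-/

open Matrix Real Set

lemma det_fin_three_one_neg (a b c : ℝ) :
    !![1, -a, -b; -a, 1, -c; -b, -c, 1].det = 1 - a ^ 2 - b ^ 2 - c ^ 2 - 2 * a * b * c := by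
  rw [det_fin_three]
  simp only [of_apply, cons_val', cons_val_zero, cons_val_fin_one, cons_val_one, cons_val]
  ring

lemma one_sub_cos_sq_sub_cos_sq_sub_cos_sq_sub_two_mul_eq (α β γ : ℝ) :
    1 - cos α ^ 2 - cos β ^ 2 - cos γ ^ 2 - 2 * cos α * cos β * cos γ =
      -((cos α + cos (β + γ)) * (cos α + cos (β - γ))) := by
  rw [cos_add, cos_sub]
  linear_combination (-sin γ ^ 2) * sin_sq_add_cos_sq β + (cos β ^ 2 - 1) * sin_sq_add_cos_sq γ

lemma one_sub_cos_sq_sub_cos_sq_sub_cos_sq_sub_two_mul_eq_zero_iff {α β γ : ℝ}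
    (hα : α ∈ Icc 0 (π / 2)) (hβ : β ∈ Ioc 0 (π / 2)) (hγ : γ ∈ Ioc 0 (π / 2)) :
    1 - cos α ^ 2 - cos β ^ 2 - cos γ ^ 2 - 2 * cos α * cos β * cos γ = 0 ↔
      α + β + γ = π := by
  obtain ⟨hα₀, hα₁⟩ := hα
  obtain ⟨hβ₀, hβ₁⟩ := hβ
  obtain ⟨hγ₀, hγ₁⟩ := hγ
  have hpos : 0 < cos α + cos (β - γ) :=
    add_pos_of_nonneg_of_pos (cos_nonneg_of_mem_Icc ⟨by linarith, hα₁⟩)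
      (cos_pos_of_mem_Ioo ⟨by linarith, by linarith⟩)
  rw [one_sub_cos_sq_sub_cos_sq_sub_cos_sq_sub_two_mul_eq, neg_eq_zero, mul_eq_zero,
    or_iff_left hpos.ne', add_eq_zero_iff_eq_neg, ← cos_pi_sub,
    injOn_cos.eq_iff ⟨by linarith, by linarith⟩ ⟨by linarith, by linarith⟩]
  constructor <;> intro h <;> linarith

lemma pi_div_natCast_mem_Ioc {k : ℕ} (hk : 2 ≤ k) : π / k ∈ Ioc 0 (π / 2) :=
  ⟨div_pos pi_pos (Nat.cast_pos.2 (by omega)),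
    div_le_div_of_nonneg_left pi_pos.le two_pos (by exact_mod_cast hk)⟩

lemma pi_div_add_pi_div_add_pi_div_eq_pi_iff (x y z : ℝ) :
    π / x + π / y + π / z = π ↔ x⁻¹ + y⁻¹ + z⁻¹ = 1 := by
  simp only [div_eq_mul_inv, ← mul_add, mul_eq_left₀ pi_ne_zero]

lemma natCast_inv_add_inv_add_inv_eq_one_iff {k l m : ℕ} (hk : k ≠ 0) (hl : l ≠ 0)
    (hm : m ≠ 0) :
    (k : ℝ)⁻¹ + (l : ℝ)⁻¹ + (m : ℝ)⁻¹ = 1 ↔ k * l * m = k * l + k * m + l * m := by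
  rw [← Nat.cast_inj (R := ℝ)]
  push_cast
  field_simp
  constructor <;> intro h <;> linarith

lemma le_six_of_mul_mul_eq {k l m : ℕ} (hl : 2 ≤ l) (hm : 2 ≤ m)
    (h : k * l * m = k * l + k * m + l * m) : k ≤ 6 := by
  by_contra! hk
  -- `k ≥ 7` forces `6lm ≤ 7(l + m)`, which for `l, m ≥ 2` leaves only `l = m = 2`.
  have hlm : 6 * l * m ≤ 7 * (l + m) := by nlinarith
  obtain rfl : l = 2 := by nlinarith
  obtain rfl : m = 2 := by nlinarith
  omega

lemma mul_mul_eq_mul_add_mul_add_mul_iff {k l m : ℕ} (hk : 2 ≤ k) (hl : 2 ≤ l) (hm : 2 ≤ m) :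
    k * l * m = k * l + k * m + l * m ↔
      ({k, l, m} : Multiset ℕ) = {3, 3, 3} ∨
      ({k, l, m} : Multiset ℕ) = {2, 4, 4} ∨
      ({k, l, m} : Multiset ℕ) = {2, 3, 6} := by
  constructor
  · intro h
    have hk6 := le_six_of_mul_mul_eq hl hm h
    have hl6 := le_six_of_mul_mul_eq (k := l) hk hm (by linarith)
    have hm6 := le_six_of_mul_mul_eq (k := m) hk hl (by linarith)
    interval_cases k <;> interval_cases l <;> interval_cases m <;> first | omega | decide
  · -- both sides of the equation are symmetric functions of the multiset `{k, l, m}`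
    have hprod : ({k, l, m} : Multiset ℕ).prod = k * l * m := by simp [mul_assoc]
    have hesymm : ({k, l, m} : Multiset ℕ).esymm 2 = k * l + k * m + l * m := by
      simp [Multiset.esymm, Multiset.powersetCard_one]
      ring
    rw [← hprod, ← hesymm]
    rintro (h | h | h) <;> rw [h] <;> rfl

/-- The determinant of the rank-3 Coxeter Gram matrix vanishes exactly for the
Euclidean triples (3,3,3), (2,4,4), (2,3,6) (up to permutation). -/
theorem euclidean_triangle_det_zero_iff
    (k l m : ℕ) (hk : 2 ≤ k) (hl : 2 ≤ l) (hm : 2 ≤ m) :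
    (!![(1 : ℝ), -Real.cos (π / k), -Real.cos (π / l);
        -Real.cos (π / k), 1, -Real.cos (π / m);
        -Real.cos (π / l), -Real.cos (π / m), 1]).det = 0 ↔
      ({k, l, m} : Multiset ℕ) = {3, 3, 3} ∨
      ({k, l, m} : Multiset ℕ) = {2, 4, 4} ∨
      ({k, l, m} : Multiset ℕ) = {2, 3, 6} := by
  rw [det_fin_three_one_neg,
    one_sub_cos_sq_sub_cos_sq_sub_cos_sq_sub_two_mul_eq_zero_iff
      (Ioc_subset_Icc_self (pi_div_natCast_mem_Ioc hk)) (pi_div_natCast_mem_Ioc hl)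
      (pi_div_natCast_mem_Ioc hm),
    pi_div_add_pi_div_add_pi_div_eq_pi_iff,
    natCast_inv_add_inv_add_inv_eq_one_iff (by omega) (by omega) (by omega),
    mul_mul_eq_mul_add_mul_add_mul_iff hk hl hm]
end

section
/- Let G be the 4×4 symmetric matrix with ones on the diagonal, G_{12} = −cos(π/5), G_{23} = −1/2, G_{34} = −cos(π/5), and all other off-diagonal entries 0. Then det G < 0, so G is not positive definite and not positive semidefinite. -/
open Matrix Real

/-!
With `a = cos (π / 5)` the determinant of the Gram matrix is `(1 - a²)² - 1/4`, which is negative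
exactly when `a² > 1/2 = cos² (π / 4)`; this holds because cosine decreases on `[0, π]`.
A positive semidefinite matrix has nonnegative determinant, so `G` is not positive (semi)definite.
-/

namespace Matrix

open scoped ComplexOrder

variable {n 𝕜 : Type*} [Fintype n] [DecidableEq n] [RCLike 𝕜] {A : Matrix n n 𝕜}

theorem not_posSemidef_of_det_neg (h : A.det < 0) : ¬ A.PosSemidef :=
  fun hA => hA.det_nonneg.not_gt h

theorem not_posDef_of_det_neg (h : A.det < 0) : ¬ A.PosDef :=
  fun hA => not_posSemidef_of_det_neg h hA.posSemidef

end Matrix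

theorem det_tridiagonal_four_of_diag_one {R : Type*} [CommRing R] (x y z : R) :
    (!![1, x, 0, 0;
        x, 1, y, 0;
        0, y, 1, z;
        0, 0, z, 1]).det = 1 - x ^ 2 - y ^ 2 - z ^ 2 + x ^ 2 * z ^ 2 := by
  simp [det_succ_row_zero, Fin.sum_univ_succ, Fin.succAbove]
  ring

theorem half_lt_cos_pi_div_five_sq : 1 / 2 < cos (π / 5) ^ 2 := by
  have hlt : cos (π / 4) < cos (π / 5) :=
    cos_lt_cos_of_nonneg_of_le_pi (by positivity) (by linarith [pi_pos]) (by linarith [pi_pos])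
  have hsqrt2 : (√2 / 2) ^ 2 = 1 / 2 := by
    rw [div_pow, sq_sqrt zero_le_two]
    norm_num
  rw [cos_pi_div_four] at hlt
  nlinarith [sqrt_nonneg 2]

/-- The Gram matrix of the Lannér diagram 5−3−5 has negative determinant, hence is
neither positive definite nor positive semidefinite. -/
theorem lanner_535_not_posDef :
    (!![(1 : ℝ), -Real.cos (π / 5), 0, 0;
        -Real.cos (π / 5), 1, -1/2, 0;
        0, -1/2, 1, -Real.cos (π / 5);
        0, 0, -Real.cos (π / 5), 1]).det < 0 ∧
    ¬ (!![(1 : ℝ), -Real.cos (π / 5), 0, 0;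
        -Real.cos (π / 5), 1, -1/2, 0;
        0, -1/2, 1, -Real.cos (π / 5);
        0, 0, -Real.cos (π / 5), 1]).PosDef ∧
    ¬ (!![(1 : ℝ), -Real.cos (π / 5), 0, 0;
        -Real.cos (π / 5), 1, -1/2, 0;
        0, -1/2, 1, -Real.cos (π / 5);
        0, 0, -Real.cos (π / 5), 1]).PosSemidef := by
  have hdet : (!![(1 : ℝ), -Real.cos (π / 5), 0, 0;
        -Real.cos (π / 5), 1, -1/2, 0;
        0, -1/2, 1, -Real.cos (π / 5);
        0, 0, -Real.cos (π / 5), 1]).det < 0 := by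
    rw [det_tridiagonal_four_of_diag_one]
    have hfactor : 1 - (-cos (π / 5)) ^ 2 - (-1 / 2 : ℝ) ^ 2 - (-cos (π / 5)) ^ 2
        + (-cos (π / 5)) ^ 2 * (-cos (π / 5)) ^ 2
        = (cos (π / 5) ^ 2 - 1 / 2) * (cos (π / 5) ^ 2 - 3 / 2) := by ring
    rw [hfactor]
    exact mul_neg_of_pos_of_neg (by linarith [half_lt_cos_pi_div_five_sq])
      (by linarith [cos_sq_le_one (π / 5)])
  exact ⟨hdet, not_posDef_of_det_neg hdet, not_posSemidef_of_det_neg hdet⟩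
end

section
/- Let G be the 5×5 symmetric matrix with ones on the diagonal, G_{12} = −cos(π/5), G_{23} = G_{34} = G_{45} = −1/2, and all other off-diagonal entries 0 (the Coxeter diagram H₄ extended, i.e., the diagram 5−3−3−3). Then G has signature (4,1): four positive eigenvalues and one negative eigenvalue. -/
/-!
By Gershgorin's theorem every eigenvalue of the Gram matrix is at most the largest absolute row
sum, which is `3/2 + cos (π/5) ≤ 5/2`. The determinant `5/16 - cos² (π/5) / 2` is negative, so an
odd number of eigenvalues is negative and none vanishes. Three negative eigenvalues would leave
two positive ones summing to more than the trace `5`, but each is at most `5/2`; hence exactly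
one eigenvalue is negative and the other four are positive.
-/

open Matrix Real

section SignCount

open Finset

variable {ι : Type*}

theorem Finset.prod_eq_neg_one_pow_card_filter_neg_mul_prod_abs (s : Finset ι) (f : ι → ℝ) :
    ∏ i ∈ s, f i = (-1) ^ #{i ∈ s | f i < 0} * ∏ i ∈ s, |f i| := by
  calc ∏ i ∈ s, f i = ∏ i ∈ s, (if f i < 0 then -1 else 1) * |f i| := by
        refine prod_congr rfl fun i _ => ?_
        split_ifs with h
        · simp [abs_of_neg h]
        · simp [abs_of_nonneg (not_lt.mp h)]
    _ = _ := by rw [prod_mul_distrib, prod_ite, prod_const, prod_const_one, mul_one]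

theorem Finset.sum_lt_of_three_le_card_filter_neg [Fintype ι] {f : ι → ℝ} {b : ℝ}
    (hb : ∀ i, f i ≤ b) (h3 : 3 ≤ #{i | f i < 0}) :
    ∑ i, f i < (Fintype.card ι - 3) * b := by
  classical
  obtain ⟨t, hts, ht⟩ := exists_subset_card_eq h3
  have hneg : ∑ i ∈ t, f i < 0 :=
    sum_neg (fun i hi => (mem_filter.mp (hts hi)).2) (card_pos.mp (by omega))
  have hrest : ∑ i ∈ tᶜ, f i ≤ #tᶜ • b := sum_le_card_nsmul _ _ _ fun i _ => hb i
  rw [card_compl, ht, nsmul_eq_mul, Nat.cast_sub (ht ▸ card_le_univ t)] at hrest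
  rw [← sum_add_sum_compl t]
  push_cast at hrest
  linarith

theorem ncard_setOf_neg_eq_one_of_prod_neg [Fintype ι] {f : ι → ℝ} {b : ℝ}
    (hprod : ∏ i, f i < 0) (hb : ∀ i, f i ≤ b) (hsum : (Fintype.card ι - 3) * b ≤ ∑ i, f i) :
    {i | f i < 0}.ncard = 1 ∧ {i | 0 < f i}.ncard = Fintype.card ι - 1 := by
  simp only [Set.ncard_eq_toFinset_card', Set.toFinset_ofPred]
  have hodd : Odd #{i | f i < 0} := by
    rw [prod_eq_neg_one_pow_card_filter_neg_mul_prod_abs] at hprod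
    by_contra heven
    rw [Nat.not_odd_iff_even.mp heven |>.neg_one_pow, one_mul] at hprod
    exact (prod_nonneg fun i _ => abs_nonneg (f i)).not_gt hprod
  have hlt : #{i | f i < 0} < 3 := by
    by_contra! h3
    exact (sum_lt_of_three_le_card_filter_neg hb h3).not_ge hsum
  have hneg : #{i | f i < 0} = 1 := by
    rw [Nat.odd_iff] at hodd
    omega
  have hpos : #{i | 0 < f i} = #{i | ¬ f i < 0} := by
    refine congrArg card (filter_congr fun i _ => ?_)
    have hi : f i ≠ 0 := fun h => hprod.ne (prod_eq_zero (mem_univ i) h)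
    exact (not_lt.trans hi.symm.le_iff_lt).symm
  refine ⟨hneg, ?_⟩
  have hsplit := card_filter_add_card_filter_not (s := univ) fun i => f i < 0
  rw [card_univ] at hsplit
  omega

end SignCount

namespace Matrix

variable {n : Type*} [Fintype n] [DecidableEq n] {A : Matrix n n ℝ}

theorem exists_le_sum_norm_of_hasEigenvalue {μ : ℝ} (hμ : Module.End.HasEigenvalue A.toLin' μ) :
    ∃ k, μ ≤ ∑ j, ‖A k j‖ := by
  obtain ⟨k, hk⟩ := eigenvalue_mem_ball hμ
  rw [Metric.mem_closedBall, Real.dist_eq] at hk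
  refine ⟨k, ?_⟩
  rw [← Finset.add_sum_erase _ _ (Finset.mem_univ k)]
  linarith [le_abs_self (μ - A k k), Real.le_norm_self (A k k)]

theorem IsHermitian.hasEigenvalue_eigenvalues (hA : A.IsHermitian) (i : n) :
    Module.End.HasEigenvalue A.toLin' (hA.eigenvalues i) :=
  .of_mem_spectrum <| (spectrum_toLin' A).symm ▸ hA.eigenvalues_mem_spectrum_real i

theorem IsHermitian.ncard_eigenvalues_neg_eq_one_of_det_neg (hA : A.IsHermitian) {b : ℝ}
    (hdet : A.det < 0) (hrow : ∀ k, ∑ j, ‖A k j‖ ≤ b)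
    (htrace : (Fintype.card n - 3) * b ≤ A.trace) :
    {i | hA.eigenvalues i < 0}.ncard = 1 ∧
      {i | 0 < hA.eigenvalues i}.ncard = Fintype.card n - 1 := by
  refine ncard_setOf_neg_eq_one_of_prod_neg (b := b) ?_ (fun i => ?_) ?_
  · simpa [hA.det_eq_prod_eigenvalues] using hdet
  · obtain ⟨k, hk⟩ := exists_le_sum_norm_of_hasEigenvalue (hA.hasEigenvalue_eigenvalues i)
    exact hk.trans (hrow k)
  · simpa [hA.trace_eq_sum_eigenvalues] using htrace

end Matrix

noncomputable def gram5333 : Matrix (Fin 5) (Fin 5) ℝ :=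
  !![1, -cos (π / 5), 0, 0, 0;
    -cos (π / 5), 1, -1/2, 0, 0;
    0, -1/2, 1, -1/2, 0;
    0, 0, -1/2, 1, -1/2;
    0, 0, 0, -1/2, 1]

theorem isHermitian_gram5333 : gram5333.IsHermitian := by
  ext i j
  fin_cases i <;> fin_cases j <;> simp [gram5333]

theorem trace_gram5333 : gram5333.trace = 5 := by
  simp only [trace, diag_apply, gram5333, of_apply, cons_val', cons_val_fin_one,
    Fin.sum_univ_five, cons_val_zero, cons_val_one, cons_val]
  norm_num

theorem det_gram5333 : gram5333.det = 5 / 16 - cos (π / 5) ^ 2 / 2 := by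
  simp [gram5333, -cos_pi_div_five, det_succ_row_zero, Fin.sum_univ_succ, Fin.succAbove]
  ring

theorem det_gram5333_neg : gram5333.det < 0 := by
  have h5 : (2 : ℝ) < √5 := (lt_sqrt zero_le_two).2 (by norm_num)
  rw [det_gram5333, cos_pi_div_five]
  nlinarith [sq_sqrt (show (0 : ℝ) ≤ 5 by norm_num)]

theorem sum_norm_gram5333_le (k : Fin 5) : ∑ j, ‖gram5333 k j‖ ≤ 5 / 2 := by
  have hcos : 0 ≤ cos (π / 5) := by rw [cos_pi_div_five]; positivity
  fin_cases k <;> simp [gram5333, Fin.sum_univ_five, abs_of_nonneg hcos, -cos_pi_div_five] <;>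
    linarith [cos_le_one (π / 5)]

/-- The Gram matrix of the Lannér diagram 5−3−3−3 (compact hyperbolic Coxeter
4-simplex) has signature (4,1): four positive and one negative eigenvalue. -/
theorem lanner_5333_signature :
    ∃ hM : (!![(1 : ℝ), -Real.cos (π / 5), 0, 0, 0;
        -Real.cos (π / 5), 1, -1/2, 0, 0;
        0, -1/2, 1, -1/2, 0;
        0, 0, -1/2, 1, -1/2;
        0, 0, 0, -1/2, 1]).IsHermitian,
      {i | hM.eigenvalues i < 0}.ncard = 1 ∧
      {i | 0 < hM.eigenvalues i}.ncard = 4 :=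
  ⟨isHermitian_gram5333, isHermitian_gram5333.ncard_eigenvalues_neg_eq_one_of_det_neg
    det_gram5333_neg sum_norm_gram5333_le (by norm_num [trace_gram5333])⟩
end

section
/- The system of equations and inequalities: −2 + 5x − 3x² − √2·h + √2·x·h − 2x·h² + 2x²·h² = 0, −4 + 10x − 6x² + h² − 3x·h² + 2x²·h² = 0, with x < −1 and 1.8 < h < 2, has no solution (x, h) such that h = 2·cos(π/n) for some integer n ≥ 7. -/
/-!
Subtracting twice the first equation from the second leaves `h (1 - x) ((1 + 2x) h + 2√2)`,
and the second equation alone factors as `(x - 1) ((2x - 1) h² - (6x - 4))`. Away from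
`x = 1` and `h = 0`, eliminating `x` from the two remaining factors shows that `h` is a root of
`2h³ + 2√2 h² - 7h - 6√2`, which on `(1.8, 2)` has a single root, `h ≈ 1.8113`. This lies strictly
between `2cos(π/7) ≈ 1.8019` and `2cos(π/8) = √(2 + √2) ≈ 1.8478`.
-/

open Real

lemma cubic_of_minor_eqs {x h : ℝ}
    (e₁ : -2 + 5 * x - 3 * x ^ 2 - √2 * h + √2 * x * h - 2 * x * h ^ 2 + 2 * x ^ 2 * h ^ 2 = 0)
    (e₂ : -4 + 10 * x - 6 * x ^ 2 + h ^ 2 - 3 * x * h ^ 2 + 2 * x ^ 2 * h ^ 2 = 0)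
    (hx : x ≠ 1) (hh : h ≠ 0) :
    2 * h ^ 3 + 2 * √2 * h ^ 2 - 7 * h - 6 * √2 = 0 := by
  have hx' : x - 1 ≠ 0 := sub_ne_zero.mpr hx
  have hlin : (1 + 2 * x) * h + 2 * √2 = 0 := by
    have : h * (x - 1) * ((1 + 2 * x) * h + 2 * √2) = 0 := by
      linear_combination 2 * e₁ - e₂
    simpa [hh, hx'] using this
  have hquad : (2 * x - 1) * h ^ 2 - (6 * x - 4) = 0 := by
    have : (x - 1) * ((2 * x - 1) * h ^ 2 - (6 * x - 4)) = 0 := by linear_combination e₂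
    simpa [hx'] using this
  linear_combination (h ^ 2 - 3) * hlin - h * hquad

lemma cubic_root_bounds {h : ℝ} (hh : 1.8 < h)
    (hc : 2 * h ^ 3 + 2 * √2 * h ^ 2 - 7 * h - 6 * √2 = 0) :
    1.81 < h ∧ h < 1.84 := by
  have hs : √2 ^ 2 = 2 := sq_sqrt zero_le_two
  have hs₁ : 1.41421 < √2 := by nlinarith [sqrt_nonneg 2]
  have hs₂ : √2 < 1.41422 := by nlinarith [sqrt_nonneg 2]
  constructor <;> nlinarith [sq_nonneg (h - 1.81), sq_nonneg (h - 1.84)]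

lemma cos_pi_div_seven_cubic :
    8 * cos (π / 7) ^ 3 - 4 * cos (π / 7) ^ 2 - 4 * cos (π / 7) + 1 = 0 := by
  set c := cos (π / 7)
  have hc₀ : 0 < c := cos_pos_of_mem_Ioo ⟨by linarith [pi_pos], by linarith [pi_pos]⟩
  -- `cos (4π/7) = -cos (3π/7)`, expanded as polynomials in `c`
  have hq : 2 * (2 * c ^ 2 - 1) ^ 2 - 1 = -(4 * c ^ 3 - 3 * c) := by
    rw [← cos_two_mul, ← cos_two_mul, ← cos_three_mul, ← mul_assoc,
      show 2 * 2 * (π / 7) = π - 3 * (π / 7) by ring, cos_pi_sub]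
  have : (c + 1) * (8 * c ^ 3 - 4 * c ^ 2 - 4 * c + 1) = 0 := by linear_combination hq
  simpa [show c + 1 ≠ 0 by positivity] using this

lemma two_mul_cos_pi_div_seven_lt : 2 * cos (π / 7) < 1.81 := by
  have hcos := cos_pi_div_seven_cubic
  have hlow : 1 - (π / 7) ^ 2 / 2 ≤ cos (π / 7) := one_sub_sq_div_two_le_cos
  have hπ := pi_lt_d2
  -- the lower bound `0.898` leaves only the largest root of the cubic, `≈ 0.901`
  nlinarith [pi_pos, sq_nonneg (cos (π / 7) - 0.905)]

lemma lt_two_mul_cos_pi_div {n : ℕ} (hn : 8 ≤ n) : 1.84 < 2 * cos (π / n) := by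
  have hmono : cos (π / 8) ≤ cos (π / n) :=
    cos_le_cos_of_nonneg_of_le_pi (by positivity)
      (div_le_self pi_pos.le (by norm_num))
      (div_le_div_of_nonneg_left pi_pos.le (by norm_num) (by exact_mod_cast hn))
  have h8 : 1.84 < √(2 + √2) := by
    rw [lt_sqrt (by norm_num)]
    have : 1.3856 < √2 := by
      rw [lt_sqrt (by norm_num)]; norm_num
    linarith
  rw [cos_pi_div_eight] at hmono
  linarith

/-- The minor equations of the last Gram-matrix candidate for the polytope P₁₇ have
no solution with x < −1 and h = 2cos(π/n) for an integer n ≥ 7. -/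
theorem P17_final_case_no_solution :
    ¬ ∃ x h : ℝ,
      -2 + 5 * x - 3 * x ^ 2 - Real.sqrt 2 * h + Real.sqrt 2 * x * h
        - 2 * x * h ^ 2 + 2 * x ^ 2 * h ^ 2 = 0 ∧
      -4 + 10 * x - 6 * x ^ 2 + h ^ 2 - 3 * x * h ^ 2 + 2 * x ^ 2 * h ^ 2 = 0 ∧
      x < -1 ∧ 1.8 < h ∧ h < 2 ∧
      ∃ n : ℕ, 7 ≤ n ∧ h = 2 * Real.cos (π / n) := by
  rintro ⟨x, h, e₁, e₂, hx, hh, -, n, hn, rfl⟩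
  have hc := cubic_of_minor_eqs e₁ e₂ (by linarith) (by linarith)
  obtain ⟨hlow, hhigh⟩ := cubic_root_bounds hh hc
  obtain rfl | hn8 := (show n = 7 ∨ 8 ≤ n by omega)
  · have := two_mul_cos_pi_div_seven_lt
    push_cast at hlow
    linarith
  · linarith [lt_two_mul_cos_pi_div hn8]
end
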